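/- The elegant Bell expression attains the value 2 + 2√5 with the strategy: maximally entangled state |φ⁺⟩, Alice's observables A₁ = A₂ = Z, A₃ = X (note [A₁, A₂] = 0), and Bob's observables B₁ = (2Z + X)/√5, B₄ = (−2Z + X)/√5, B₂ = B₃ = −X. -/

import Mathlib

/-! On `|φ⁺⟩` the correlator is `⟨A ⊗ B⟩ = tr(A Bᵀ)/2`, hence bilinear, with
`⟨Z ⊗ Z⟩ = ⟨X ⊗ X⟩ = 1` and `⟨Z ⊗ X⟩ = ⟨X ⊗ Z⟩ = 0`. Expanding Bob's observables in `Z` and `X`,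
the two `Z` rows of the expression contribute `4/√5` each and the `X` row `2 + 2/√5`,
for a total of `2 + 10/√5 = 2 + 2√5`. -/

open Matrix Kronecker

noncomputable section

def σX : Matrix (Fin 2) (Fin 2) ℂ := !![0, 1; 1, 0]
def σZ : Matrix (Fin 2) (Fin 2) ℂ := !![1, 0; 0, -1]

/-- The maximally entangled two-qubit state `|φ⁺⟩ = (|00⟩ + |11⟩)/√2`. -/
def phiPlus : Fin 2 × Fin 2 → ℂ :=
  fun p => if p.1 = p.2 then ((Real.sqrt 2)⁻¹ : ℝ) else 0

/-- Correlator `⟨A ⊗ B⟩ = ⟨φ⁺|A ⊗ B|φ⁺⟩`. -/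
def corr (A B : Matrix (Fin 2) (Fin 2) ℂ) : ℝ :=
  (star phiPlus ⬝ᵥ ((A ⊗ₖ B) *ᵥ phiPlus)).re

/-- Alice's observables: `A₁ = A₂ = Z`, `A₃ = X` (so `[A₁, A₂] = 0`). -/
def Alices : Fin 3 → Matrix (Fin 2) (Fin 2) ℂ := ![σZ, σZ, σX]

/-- Bob's observables: `B₁ = (2Z + X)/√5`, `B₂ = B₃ = −X`, `B₄ = (−2Z + X)/√5`. -/
def Bobs : Fin 4 → Matrix (Fin 2) (Fin 2) ℂ :=
  ![ (((Real.sqrt 5)⁻¹ : ℝ) : ℂ) • ((2 : ℂ) • σZ + σX),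
     -σX,
     -σX,
     (((Real.sqrt 5)⁻¹ : ℝ) : ℂ) • (-(2 : ℂ) • σZ + σX) ]

theorem corr_eq_re_trace (A B : Matrix (Fin 2) (Fin 2) ℂ) :
    corr A B = (A * Bᵀ).trace.re / 2 := by
  unfold corr phiPlus
  simp only [dotProduct, mulVec, Fintype.sum_prod_type, Fin.sum_univ_two, kroneckerMap_apply,
    trace_fin_two, mul_apply, transpose_apply, Pi.star_apply]
  simp only [↓reduceIte, Complex.ofReal_inv, star_inv₀, RCLike.star_def, Complex.conj_ofReal,
    Fin.isValue, zero_ne_one, mul_zero, add_zero, one_ne_zero, zero_add, star_zero, zero_mul,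
    Complex.add_re, Complex.mul_re, Complex.inv_re, Complex.ofReal_re, Complex.normSq_ofReal,
    Nat.ofNat_nonneg, Real.mul_self_sqrt, Complex.mul_im, Complex.inv_im, Complex.ofReal_im,
    neg_zero, zero_div, sub_zero, Complex.add_im]
  ring_nf
  rw [Real.sq_sqrt zero_le_two]
  ring

theorem corr_add_right (A B C : Matrix (Fin 2) (Fin 2) ℂ) :
    corr A (B + C) = corr A B + corr A C := by
  simp only [corr_eq_re_trace, transpose_add, mul_add, trace_add, Complex.add_re, add_div]

theorem corr_neg_right (A B : Matrix (Fin 2) (Fin 2) ℂ) : corr A (-B) = -corr A B := by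
  simp only [corr_eq_re_trace, transpose_neg, mul_neg, trace_neg, Complex.neg_re, neg_div]

theorem corr_ofReal_smul_right (A B : Matrix (Fin 2) (Fin 2) ℂ) (r : ℝ) :
    corr A ((r : ℂ) • B) = r * corr A B := by
  simp only [corr_eq_re_trace, transpose_smul, mul_smul_comm, trace_smul, smul_eq_mul,
    Complex.re_ofReal_mul, mul_div_assoc]

theorem σZ_transpose : σZᵀ = σZ := by
  ext i j; fin_cases i <;> fin_cases j <;> rfl

theorem σX_transpose : σXᵀ = σX := by
  ext i j; fin_cases i <;> fin_cases j <;> rfl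

theorem σZ_mul_self : σZ * σZ = 1 := by
  ext i j; fin_cases i <;> fin_cases j <;> simp [σZ, mul_apply, Fin.sum_univ_two]

theorem σX_mul_self : σX * σX = 1 := by
  ext i j; fin_cases i <;> fin_cases j <;> simp [σX, mul_apply, Fin.sum_univ_two]

theorem trace_σZ_mul_σX : (σZ * σX).trace = 0 := by
  simp [σZ, σX, trace_fin_two]

theorem trace_σX_mul_σZ : (σX * σZ).trace = 0 := by
  simp [σZ, σX, trace_fin_two]

theorem corr_σZ_σZ : corr σZ σZ = 1 := by
  simp [corr_eq_re_trace, σZ_transpose, σZ_mul_self]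

theorem corr_σX_σX : corr σX σX = 1 := by
  simp [corr_eq_re_trace, σX_transpose, σX_mul_self]

theorem corr_σZ_σX : corr σZ σX = 0 := by
  simp [corr_eq_re_trace, σX_transpose, trace_σZ_mul_σX]

theorem corr_σX_σZ : corr σX σZ = 0 := by
  simp [corr_eq_re_trace, σZ_transpose, trace_σX_mul_σZ]

/-- The elegant Bell expression attains `2 + 2√5` with the strategy
`A₁ = A₂ = Z`, `A₃ = X` and Bob's observables above on `|φ⁺⟩`,
even though Alice's first two observables commute. -/
theorem elegant_attains_Q2convJM_bound :
    Alices 0 * Alices 1 = Alices 1 * Alices 0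
    ∧ corr (Alices 0) (Bobs 0) + corr (Alices 0) (Bobs 1)
        - corr (Alices 0) (Bobs 2) - corr (Alices 0) (Bobs 3)
      + corr (Alices 1) (Bobs 0) - corr (Alices 1) (Bobs 1)
        + corr (Alices 1) (Bobs 2) - corr (Alices 1) (Bobs 3)
      + corr (Alices 2) (Bobs 0) - corr (Alices 2) (Bobs 1)
        - corr (Alices 2) (Bobs 2) + corr (Alices 2) (Bobs 3)
      = 2 + 2 * Real.sqrt 5 := by
  refine ⟨rfl, ?_⟩
  have two_eq_ofReal : (2 : ℂ) = ((2 : ℝ) : ℂ) := by norm_num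
  simp only [Alices, Bobs, Fin.isValue, cons_val_zero, cons_val_one, cons_val_two, cons_val_three,
    vecHead, vecTail, Function.comp_apply, Fin.succ_zero_eq_one, Fin.succ_one_eq_two,
    two_eq_ofReal, neg_smul, corr_add_right, corr_neg_right, corr_ofReal_smul_right,
    corr_σZ_σZ, corr_σX_σX, corr_σZ_σX, corr_σX_σZ]
  have sqrt_five_sq : Real.sqrt 5 ^ 2 = 5 := Real.sq_sqrt (by norm_num)
  field_simp
  linear_combination -2 * sqrt_five_sq

end
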